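/- Let X be a real Banach space possessing a biorthogonal system bounded by a constant C, i.e. sequences {x_i} ⊂ X and {f_i} ⊂ X* with f_i(x_j) = δ_{ij} and ‖x_i‖·‖f_i‖ ≤ C for all i. Then there exists a bounded multifunction F : [0,1] → 2^X \ {∅} with F(t) convex for all t, such that I(F) = ∅. -/

import Mathlib

open Pointwise Filter Metric Set

/-- A tagged partition of `[0,1]` into finitely many segments with tags. -/
structure TaggedPartition where
  n : ℕ
  pt : Fin (n + 1) → ℝ
  tag : Fin n → ℝ
  pt_zero : pt 0 = 0
  pt_last : pt (Fin.last n) = 1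
  pt_mono : Monotone pt
  tag_mem : ∀ i : Fin n, tag i ∈ Set.Icc (pt i.castSucc) (pt i.succ)

/-- The diameter (mesh) of a tagged partition. -/
noncomputable def TaggedPartition.mesh (P : TaggedPartition) : ℝ :=
  ⨆ i : Fin P.n, (P.pt i.succ - P.pt i.castSucc)

/-- Riemann integral sum of a multifunction, using Minkowski sums and
pointwise scalar multiples of sets. -/
noncomputable def msum {X : Type*} [NormedAddCommGroup X] [NormedSpace ℝ X]
    (F : ℝ → Set X) (P : TaggedPartition) : Set X :=
  ∑ i : Fin P.n, (P.pt i.succ - P.pt i.castSucc) • F (P.tag i)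

/-- The set `I(F)` of limits of Riemann integral sums of a multifunction `F`:
all closed nonempty subsets that are Hausdorff-distance limits of sequences of Riemann
sums along sequences of tagged partitions whose diameters tend to `0`. -/
def limitSets {X : Type*} [NormedAddCommGroup X] [NormedSpace ℝ X]
    (F : ℝ → Set X) : Set (Set X) :=
  {A | A.Nonempty ∧ IsClosed A ∧ ∃ P : ℕ → TaggedPartition,
    Tendsto (fun k => (P k).mesh) atTop (nhds 0) ∧
    Tendsto (fun k => EMetric.hausdorffEdist (msum F (P k)) A) atTop (nhds 0)}

/-!
Normalize the system to `‖e r‖ = 1`, `‖g r‖ ≤ C`, `g r (e r') = δ_{r r'}`, and let `F t` be the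
convex hull of `0` and of those `e r` for which the binary digit `d_r t` of weight `2⁻⁽ʳ⁺¹⁾` of
`t` is `1`. On a Riemann sum of `F` the supremum of `g j` is the Riemann sum of `d_j`, and so is the
supremum of `g j + g l` when `d_j = d_l` at every tag; for fine partitions these Riemann sums
are close to `∫ d_j = 1/2` and `∫ max d_j d_l = 3/4` instead. If `A` were a limit of Riemann
sums, fix one of them `ε`-close to `A`: it has finitely many tags, so some `j < l` have
`d_j = d_l` at all of them. Comparing it with a much finer Riemann sum, also `ε`-close to `A`,
gives `3/4 ≤ 1/2 + O((1 + C) ε)`.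
-/

lemma Fin.sum_univ_succ_sub_castSucc {M : Type*} [AddCommGroup M] {n : ℕ} (u : Fin (n + 1) → M) :
    ∑ i : Fin n, (u i.succ - u i.castSucc) = u (Fin.last n) - u 0 := by
  induction n with
  | zero => simp
  | succ n ih =>
    rw [Fin.sum_univ_castSucc, Fin.succ_last]
    simp only [Fin.succ_castSucc]
    rw [ih (fun i => u i.castSucc)]
    simp only [Fin.castSucc_zero]
    abel

lemma Function.Periodic.sum_range_mul {M : Type*} [AddCommMonoid M] {f : ℕ → M} {c : ℕ}
    (hf : Function.Periodic f c) (n : ℕ) :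
    ∑ m ∈ Finset.range (n * c), f m = n • ∑ m ∈ Finset.range c, f m := by
  induction n with
  | zero => simp
  | succ n ih =>
    rw [add_mul, one_mul, Finset.sum_range_add, ih, succ_nsmul]
    congr 1
    exact Finset.sum_congr rfl fun m _ => by rw [add_comm]; simpa using (hf.nat_mul n) m

lemma Nat.exists_lt_forall_iff_of_finite {ι : Type*} [Finite ι] (p : ℕ → ι → Prop) :
    ∃ j l, j < l ∧ ∀ i, (p j i ↔ p l i) := by
  obtain ⟨a, b, hab, h⟩ := Finite.exists_ne_map_eq_of_infinite p
  rcases hab.lt_or_gt with hab | hab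
  · exact ⟨a, b, hab, fun i => by rw [h]⟩
  · exact ⟨b, a, hab, fun i => by rw [h]⟩

lemma natCast_div_le_iff_le_floor {N m : ℕ} (hN : 0 < N) {t : ℝ} (ht : 0 ≤ t) :
    (m : ℝ) / N ≤ t ↔ m ≤ ⌊N * t⌋₊ := by
  rw [div_le_iff₀ (by exact_mod_cast hN), Nat.le_floor_iff (by positivity), mul_comm]

lemma apply_floor_eq_sum_steps {N : ℕ} (hN : 0 < N) (w : ℕ → ℝ) (hwN : w N = 0) {t : ℝ}
    (ht : t ∈ Icc (0 : ℝ) 1) :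
    w ⌊N * t⌋₊ = ∑ m ∈ Finset.range N,
      w m * ((if (m : ℝ) / N ≤ t then 1 else 0) -
        (if ((m + 1 : ℕ) : ℝ) / N ≤ t then 1 else 0)) := by
  have hle : ⌊N * t⌋₊ ≤ N := by
    simpa using Nat.floor_le_floor (mul_le_of_le_one_right (Nat.cast_nonneg N) ht.2)
  simp_rw [natCast_div_le_iff_le_floor hN ht.1]
  have hcell : ∀ m, ((if m ≤ ⌊N * t⌋₊ then 1 else 0) - (if m + 1 ≤ ⌊N * t⌋₊ then 1 else 0) : ℝ)
      = if m = ⌊N * t⌋₊ then 1 else 0 := by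
    intro m; split_ifs <;> (try norm_num) <;> omega
  simp_rw [hcell, mul_ite, mul_one, mul_zero, Finset.sum_ite_eq', Finset.mem_range]
  split_ifs with h
  · rfl
  · rw [show ⌊N * t⌋₊ = N by omega, hwN]

namespace TaggedPartition

variable (P : TaggedPartition)

def len (i : Fin P.n) : ℝ := P.pt i.succ - P.pt i.castSucc

def riemannSum (h : ℝ → ℝ) : ℝ := ∑ i, P.len i * h (P.tag i)

lemma len_nonneg (i : Fin P.n) : 0 ≤ P.len i :=
  sub_nonneg.2 (P.pt_mono (Fin.castSucc_le_succ i))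

lemma len_le_mesh (i : Fin P.n) : P.len i ≤ P.mesh :=
  le_ciSup (Set.finite_range _).bddAbove i

lemma mesh_nonneg : 0 ≤ P.mesh := Real.iSup_nonneg P.len_nonneg

lemma tag_mem_Icc (i : Fin P.n) : P.tag i ∈ Icc (0 : ℝ) 1 := by
  rw [← P.pt_zero, ← P.pt_last]
  exact ⟨(P.pt_mono (Fin.zero_le _)).trans (P.tag_mem i).1,
    (P.tag_mem i).2.trans (P.pt_mono (Fin.le_last _))⟩

lemma riemannSum_sub (g h : ℝ → ℝ) :
    P.riemannSum (fun t => g t - h t) = P.riemannSum g - P.riemannSum h := by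
  simp only [riemannSum, mul_sub, Finset.sum_sub_distrib]

lemma riemannSum_congr {g h : ℝ → ℝ} (hgh : EqOn g h (Icc 0 1)) :
    P.riemannSum g = P.riemannSum h :=
  Finset.sum_congr rfl fun i _ => by rw [hgh (P.tag_mem_Icc i)]

lemma riemannSum_finset_sum {ι : Type*} (s : Finset ι) (h : ι → ℝ → ℝ) :
    P.riemannSum (fun t => ∑ m ∈ s, h m t) = ∑ m ∈ s, P.riemannSum (h m) := by
  simp only [riemannSum, Finset.mul_sum]
  exact Finset.sum_comm

lemma riemannSum_const_mul (c : ℝ) (h : ℝ → ℝ) :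
    P.riemannSum (fun t => c * h t) = c * P.riemannSum h := by
  simp only [riemannSum, Finset.mul_sum]
  exact Finset.sum_congr rfl fun i _ => by ring

lemma sum_sub_pt (u : ℝ → ℝ) :
    ∑ i : Fin P.n, (u (P.pt i.succ) - u (P.pt i.castSucc)) = u 1 - u 0 := by
  rw [Fin.sum_univ_succ_sub_castSucc (fun k => u (P.pt k)), P.pt_last, P.pt_zero]

/-- `max (θ - δ) (min x (θ + δ))` clips `x` to `[θ - δ, θ + δ]`: only a cell meeting this interval
feels the step at `θ`, and the clipped cell lengths add up to at most `2 δ`. -/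
lemma abs_len_mul_step_sub_le {a b ξ θ δ : ℝ} (ha : a ≤ ξ) (hb : ξ ≤ b) (hδ : b - a ≤ δ) :
    |(b - a) * (if θ ≤ ξ then 1 else 0) - (max b θ - max a θ)|
      ≤ max (θ - δ) (min b (θ + δ)) - max (θ - δ) (min a (θ + δ)) := by
  rw [abs_le]
  split_ifs with h <;> simp only [max_def, min_def] <;> split_ifs <;> constructor <;> linarith

lemma abs_riemannSum_step_sub_le {θ : ℝ} (hθ : θ ∈ Icc (0 : ℝ) 1) :
    |P.riemannSum (fun t => if θ ≤ t then 1 else 0) - (1 - θ)| ≤ 2 * P.mesh := by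
  set δ := P.mesh
  set clip : ℝ → ℝ := fun x => max (θ - δ) (min x (θ + δ))
  have hclip : clip 1 - clip 0 ≤ 2 * δ := by
    have := P.mesh_nonneg
    simp only [clip, max_def, min_def]; split_ifs <;> linarith
  calc |P.riemannSum (fun t => if θ ≤ t then 1 else 0) - (1 - θ)|
      = |∑ i, (P.len i * (if θ ≤ P.tag i then 1 else 0)
          - (max (P.pt i.succ) θ - max (P.pt i.castSucc) θ))| := by
        rw [Finset.sum_sub_distrib, P.sum_sub_pt (max · θ), max_eq_left hθ.2,
          max_eq_right hθ.1, riemannSum]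
    _ ≤ ∑ i, (clip (P.pt i.succ) - clip (P.pt i.castSucc)) :=
        (Finset.abs_sum_le_sum_abs _ _).trans <| Finset.sum_le_sum fun i _ =>
          abs_len_mul_step_sub_le (P.tag_mem i).1 (P.tag_mem i).2 (P.len_le_mesh i)
    _ ≤ 2 * δ := by rwa [P.sum_sub_pt clip]

lemma abs_riemannSum_floor_sub_le {N : ℕ} (hN : 0 < N) (w : ℕ → ℝ) (hw : ∀ m, |w m| ≤ 1)
    (hwN : w N = 0) :
    |P.riemannSum (fun t => w ⌊N * t⌋₊) - (∑ m ∈ Finset.range N, w m) / N| ≤ 4 * N * P.mesh := by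
  have hθ : ∀ m ≤ N, ((m : ℕ) : ℝ) / N ∈ Icc (0 : ℝ) 1 := fun m hm =>
    ⟨by positivity, div_le_one_of_le₀ (by exact_mod_cast hm) (Nat.cast_nonneg N)⟩
  rw [P.riemannSum_congr fun t ht => apply_floor_eq_sum_steps hN w hwN ht,
    P.riemannSum_finset_sum, Finset.sum_div, ← Finset.sum_sub_distrib]
  calc _ ≤ ∑ m ∈ Finset.range N, 4 * P.mesh := by
        refine (Finset.abs_sum_le_sum_abs _ _).trans (Finset.sum_le_sum fun m hm => ?_)
        have hmN := Finset.mem_range.1 hm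
        have h₁ := P.abs_riemannSum_step_sub_le (hθ m hmN.le)
        have h₂ := P.abs_riemannSum_step_sub_le (hθ (m + 1) hmN)
        have hcell : w m / N = w m * ((1 - (m : ℝ) / N) - (1 - ((m + 1 : ℕ) : ℝ) / N)) := by
          push_cast; field_simp; ring
        rw [P.riemannSum_const_mul, P.riemannSum_sub, hcell, ← mul_sub, abs_mul,
          sub_sub_sub_comm]
        calc _ ≤ 1 * (|_| + |_|) := mul_le_mul (hw m) (abs_sub _ _) (abs_nonneg _) zero_le_one
          _ ≤ 4 * P.mesh := by linarith
    _ = 4 * N * P.mesh := by rw [Finset.sum_const, Finset.card_range, nsmul_eq_mul]; ring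

end TaggedPartition

/-- The `(r + 1)`-th binary digit of `t` after the point; every digit of `1` is `0`. -/
noncomputable def binaryDigit (r : ℕ) (t : ℝ) : ℕ := ⌊2 ^ (r + 1) * t⌋₊ % 2

lemma binaryDigit_eq_floor_div (r k : ℕ) (t : ℝ) :
    binaryDigit r t = ⌊((2 ^ (r + 1 + k) : ℕ) : ℝ) * t⌋₊ / 2 ^ k % 2 := by
  rw [binaryDigit, ← Nat.floor_div_natCast]
  congr 2
  push_cast
  field_simp
  ring

lemma binaryDigit_eq_zero_or_one (r : ℕ) (t : ℝ) : binaryDigit r t = 0 ∨ binaryDigit r t = 1 :=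
  Nat.mod_two_eq_zero_or_one _

lemma binaryDigit_le_one (r : ℕ) (t : ℝ) : binaryDigit r t ≤ 1 :=
  Nat.le_of_lt_succ (Nat.mod_lt _ two_pos)

lemma sum_range_mod_two (j : ℕ) : ∑ m ∈ Finset.range (2 ^ (j + 1)), m % 2 = 2 ^ j := by
  have hper : Function.Periodic (· % 2) 2 := fun m => Nat.add_mod_right m 2
  rw [pow_succ, hper.sum_range_mul]
  simp [Finset.sum_range_succ]

lemma sum_range_max_div_pow_mod_two (j s : ℕ) :
    ∑ m ∈ Finset.range (2 ^ (j + s + 2)), max (m / 2 ^ (s + 1) % 2) (m % 2) = 3 * 2 ^ (j + s) := by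
  have hper : Function.Periodic (fun m => max (m / 2 ^ (s + 1) % 2) (m % 2)) (2 ^ (s + 2)) := by
    intro m
    have h : 2 ^ (s + 2) = 2 * 2 ^ (s + 1) := by ring
    dsimp only
    rw [h, Nat.add_mul_div_right _ _ (by positivity), Nat.add_mod_right,
      Nat.add_mul_mod_self_left]
  have hlow : ∀ m ∈ Finset.range (2 ^ (s + 1)), max (m / 2 ^ (s + 1) % 2) (m % 2) = m % 2 :=
    fun m hm => by rw [Nat.div_eq_of_lt (Finset.mem_range.1 hm)]; simp
  have hhigh : ∀ m ∈ Finset.range (2 ^ (s + 1)),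
      max ((2 ^ (s + 1) + m) / 2 ^ (s + 1) % 2) ((2 ^ (s + 1) + m) % 2) = 1 := fun m hm => by
    rw [Nat.add_div_left _ (by positivity), Nat.div_eq_of_lt (Finset.mem_range.1 hm)]
    have := Nat.mod_lt (2 ^ (s + 1) + m) two_pos
    omega
  rw [show j + s + 2 = j + (s + 2) by ring, pow_add, hper.sum_range_mul,
    show 2 ^ (s + 2) = 2 ^ (s + 1) + 2 ^ (s + 1) by ring, Finset.sum_range_add,
    Finset.sum_congr rfl hlow, Finset.sum_congr rfl hhigh, sum_range_mod_two]
  simp only [Finset.sum_const, Finset.card_range, smul_eq_mul, mul_one]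
  ring

namespace TaggedPartition

variable (P : TaggedPartition)

lemma abs_riemannSum_binaryDigit_sub_le (j : ℕ) :
    |P.riemannSum (fun t => (binaryDigit j t : ℝ)) - 1 / 2| ≤ 2 ^ (j + 3) * P.mesh := by
  have h := P.abs_riemannSum_floor_sub_le (N := 2 ^ (j + 1)) (by positivity)
    (fun m => ((m % 2 : ℕ) : ℝ))
    (fun m => by rw [Nat.abs_cast]; exact_mod_cast Nat.le_of_lt_succ (Nat.mod_lt m two_pos))
    (by simp [Nat.pow_mod])
  rw [← Nat.cast_sum, sum_range_mod_two] at h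
  have hdigit : (fun t => (binaryDigit j t : ℝ)) =
      fun t => ((⌊((2 ^ (j + 1) : ℕ) : ℝ) * t⌋₊ % 2 : ℕ) : ℝ) := by
    funext t; simpa using congrArg (Nat.cast (R := ℝ)) (binaryDigit_eq_floor_div j 0 t)
  rw [hdigit]
  convert h using 2
  · push_cast; field_simp; ring
  · push_cast; ring

lemma abs_riemannSum_max_binaryDigit_sub_le (j s : ℕ) :
    |P.riemannSum (fun t => (max (binaryDigit j t) (binaryDigit (j + s + 1) t) : ℝ)) - 3 / 4|
      ≤ 2 ^ (j + s + 4) * P.mesh := by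
  set w : ℕ → ℕ := fun m => max (m / 2 ^ (s + 1) % 2) (m % 2)
  have hw : ∀ m, |(w m : ℝ)| ≤ 1 := fun m => by
    rw [Nat.abs_cast]
    exact_mod_cast max_le (Nat.le_of_lt_succ (Nat.mod_lt _ two_pos))
      (Nat.le_of_lt_succ (Nat.mod_lt _ two_pos))
  have hwN : (w (2 ^ (j + s + 2)) : ℝ) = 0 := by
    have hsplit : 2 ^ (j + s + 2) = 2 ^ j * 2 * 2 ^ (s + 1) := by ring
    simp only [w, hsplit, Nat.mul_div_cancel _ (Nat.two_pow_pos (s + 1))]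
    norm_num [Nat.mul_mod]
  have h := P.abs_riemannSum_floor_sub_le (by positivity) (fun m => (w m : ℝ)) hw hwN
  rw [← Nat.cast_sum, sum_range_max_div_pow_mod_two] at h
  have hdigit : (fun t => (max (binaryDigit j t) (binaryDigit (j + s + 1) t) : ℝ)) =
      fun t => (w ⌊((2 ^ (j + s + 2) : ℕ) : ℝ) * t⌋₊ : ℝ) := by
    funext t
    rw [binaryDigit_eq_floor_div j (s + 1), binaryDigit_eq_floor_div (j + s + 1) 0]
    simp only [w, show j + 1 + (s + 1) = j + s + 2 by ring,
      show j + s + 1 + 1 + 0 = j + s + 2 by ring, pow_zero, Nat.div_one, Nat.cast_max]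
  rw [hdigit]
  convert h using 2
  · push_cast; field_simp; ring
  · push_cast; ring

end TaggedPartition

section RiemannSums

variable {X : Type*} [NormedAddCommGroup X] [NormedSpace ℝ X] (F : ℝ → Set X)
  (P : TaggedPartition)

lemma apply_le_riemannSum_of_mem_msum (φ : X →L[ℝ] ℝ) {c : ℝ → ℝ}
    (hc : ∀ i, ∀ y ∈ F (P.tag i), φ y ≤ c (P.tag i)) {z : X} (hz : z ∈ msum F P) :
    φ z ≤ P.riemannSum c := by
  obtain ⟨v, hv, rfl⟩ := (Set.mem_fintype_sum _ z).1 hz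
  rw [map_sum]
  refine Finset.sum_le_sum fun i _ => ?_
  obtain ⟨y, hy, hvy⟩ := hv i
  rw [← hvy, map_smul, smul_eq_mul]
  exact mul_le_mul_of_nonneg_left (hc i y hy) (P.len_nonneg i)

lemma exists_mem_msum_apply_eq_riemannSum (φ : X →L[ℝ] ℝ) {c : ℝ → ℝ}
    (hc : ∀ i, ∃ y ∈ F (P.tag i), φ y = c (P.tag i)) :
    ∃ z ∈ msum F P, φ z = P.riemannSum c := by
  choose y hyF hy using hc
  refine ⟨∑ i, P.len i • y i, (Set.mem_fintype_sum _ _).2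
    ⟨_, fun i => Set.smul_mem_smul_set (hyF i), rfl⟩, ?_⟩
  simp only [map_sum, map_smul, smul_eq_mul, hy, TaggedPartition.riemannSum]

end RiemannSums

lemma exists_apply_le_add_of_hausdorffEDist_lt {X : Type*} [NormedAddCommGroup X]
    [NormedSpace ℝ X] {S A : Set X} {ε : ℝ} (h : hausdorffEDist S A < ENNReal.ofReal ε)
    (φ : X →L[ℝ] ℝ) {z : X} (hz : z ∈ S) : ∃ a ∈ A, φ z ≤ φ a + ‖φ‖ * ε := by
  obtain ⟨a, ha, hza⟩ := exists_edist_lt_of_hausdorffEDist_lt hz h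
  refine ⟨a, ha, ?_⟩
  have hdist : ‖z - a‖ ≤ ε := by rw [← dist_eq_norm]; exact (edist_lt_ofReal.1 hza).le
  have := (le_abs_self _).trans (φ.le_opNorm (z - a))
  rw [map_sub] at this
  linarith [mul_le_mul_of_nonneg_left hdist (norm_nonneg φ)]

lemma exists_apply_le_add_of_hausdorffEDist_lt_of_lt {X : Type*} [NormedAddCommGroup X]
    [NormedSpace ℝ X] {S T A : Set X} {ε : ℝ} (hS : hausdorffEDist S A < ENNReal.ofReal ε)
    (hT : hausdorffEDist T A < ENNReal.ofReal ε) (φ : X →L[ℝ] ℝ) {z : X} (hz : z ∈ S) :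
    ∃ z' ∈ T, φ z ≤ φ z' + 2 * ‖φ‖ * ε := by
  obtain ⟨a, ha, hza⟩ := exists_apply_le_add_of_hausdorffEDist_lt hS φ hz
  rw [hausdorffEDist_comm] at hT
  obtain ⟨z', hz', haz'⟩ := exists_apply_le_add_of_hausdorffEDist_lt hT φ ha
  exact ⟨z', hz', by linarith⟩

section DigitHull

variable {X : Type*} [NormedAddCommGroup X] [NormedSpace ℝ X] (e : ℕ → X)

def IsBiorthogonal (g : ℕ → X →L[ℝ] ℝ) : Prop := ∀ r r', g r (e r') = if r = r' then 1 else 0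

def digitHull (t : ℝ) : Set X := convexHull ℝ (insert 0 (e '' {r | binaryDigit r t = 1}))

variable {e}

lemma zero_mem_digitHull (t : ℝ) : (0 : X) ∈ digitHull e t :=
  subset_convexHull ℝ _ (mem_insert _ _)

lemma mem_digitHull {r : ℕ} {t : ℝ} (hr : binaryDigit r t = 1) : e r ∈ digitHull e t :=
  subset_convexHull ℝ _ (mem_insert_of_mem _ ⟨r, hr, rfl⟩)

lemma norm_le_one_of_mem_digitHull (he : ∀ r, ‖e r‖ ≤ 1) {t : ℝ} {y : X}
    (hy : y ∈ digitHull e t) : ‖y‖ ≤ 1 := by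
  have hsub : insert 0 (e '' {r | binaryDigit r t = 1}) ⊆ closedBall (0 : X) 1 := by
    rintro _ (rfl | ⟨r, -, rfl⟩) <;> simp [he]
  simpa using convexHull_min hsub (convex_closedBall 0 1) hy

lemma apply_le_of_mem_digitHull (φ : X →L[ℝ] ℝ) {c t : ℝ} (hc : 0 ≤ c)
    (he : ∀ r, binaryDigit r t = 1 → φ (e r) ≤ c) {y : X} (hy : y ∈ digitHull e t) : φ y ≤ c := by
  have hsub : insert 0 (e '' {r | binaryDigit r t = 1}) ⊆ {y | φ y ≤ c} := by
    rintro _ (rfl | ⟨r, hr, rfl⟩)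
    · simpa using hc
    · exact he r hr
  exact convexHull_min hsub (convex_halfSpace_le φ.isLinear c) hy

variable {g : ℕ → X →L[ℝ] ℝ}

lemma apply_le_binaryDigit_of_mem_digitHull (hge : IsBiorthogonal e g) (j : ℕ) {t : ℝ} {y : X}
    (hy : y ∈ digitHull e t) : g j y ≤ binaryDigit j t := by
  refine apply_le_of_mem_digitHull _ (Nat.cast_nonneg _) (fun r hr => ?_) hy
  rw [hge]
  split_ifs with h
  · simp [h, hr]
  · positivity

lemma apply_add_le_binaryDigit_of_mem_digitHull (hge : IsBiorthogonal e g) {j l : ℕ} (hjl : j ≠ l)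
    {t : ℝ} (hiff : binaryDigit j t = 1 ↔ binaryDigit l t = 1) {y : X} (hy : y ∈ digitHull e t) :
    (g j + g l) y ≤ binaryDigit j t := by
  refine apply_le_of_mem_digitHull _ (Nat.cast_nonneg _) (fun r hr => ?_) hy
  rw [add_apply, hge, hge]
  split_ifs with h₁ h₂ h₂ <;> subst_vars
  · exact absurd rfl hjl
  · simp [hr]
  · simp [hiff.2 hr]
  · simp

lemma exists_mem_digitHull_apply_eq_binaryDigit (hge : IsBiorthogonal e g) (j : ℕ) (t : ℝ) :
    ∃ y ∈ digitHull e t, g j y = binaryDigit j t := by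
  rcases binaryDigit_eq_zero_or_one j t with h | h
  · exact ⟨0, zero_mem_digitHull t, by simp [h]⟩
  · exact ⟨e j, mem_digitHull h, by simp [hge j j, h]⟩

lemma exists_mem_digitHull_apply_add_eq_max (hge : IsBiorthogonal e g) {j l : ℕ} (hjl : j ≠ l)
    (t : ℝ) :
    ∃ y ∈ digitHull e t, (g j + g l) y = max (binaryDigit j t : ℝ) (binaryDigit l t) := by
  rcases binaryDigit_eq_zero_or_one j t with hj | hj
  · rcases binaryDigit_eq_zero_or_one l t with hl | hl
    · exact ⟨0, zero_mem_digitHull t, by simp [hj, hl]⟩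
    · exact ⟨e l, mem_digitHull hl, by simp [hge j l, hge l l, hj, hl, hjl]⟩
  · exact ⟨e j, mem_digitHull hj, by simp [hge j j, hge l j, hj, hjl.symm, binaryDigit_le_one]⟩

variable (P : TaggedPartition)

lemma exists_mem_msum_digitHull_apply_eq (hge : IsBiorthogonal e g) (j : ℕ) :
    ∃ z ∈ msum (digitHull e) P, g j z = P.riemannSum (fun t => (binaryDigit j t : ℝ)) :=
  exists_mem_msum_apply_eq_riemannSum _ P (g j) fun _ =>
    exists_mem_digitHull_apply_eq_binaryDigit hge j _

lemma apply_add_le_of_mem_msum_digitHull (hge : IsBiorthogonal e g) {j l : ℕ} (hjl : j ≠ l)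
    (hiff : ∀ i, binaryDigit j (P.tag i) = 1 ↔ binaryDigit l (P.tag i) = 1) {z : X}
    (hz : z ∈ msum (digitHull e) P) :
    (g j + g l) z ≤ P.riemannSum (fun t => (binaryDigit j t : ℝ)) :=
  apply_le_riemannSum_of_mem_msum _ P _
    (fun i _ hy => apply_add_le_binaryDigit_of_mem_digitHull hge hjl (hiff i) hy) hz

lemma apply_le_of_mem_msum_digitHull (hge : IsBiorthogonal e g) (j : ℕ) {z : X}
    (hz : z ∈ msum (digitHull e) P) :
    g j z ≤ 1 / 2 + 2 ^ (j + 3) * P.mesh := by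
  have h := apply_le_riemannSum_of_mem_msum _ P (g j) (c := fun t => (binaryDigit j t : ℝ))
    (fun i _ hy => apply_le_binaryDigit_of_mem_digitHull hge j hy) hz
  linarith [(abs_le.1 (P.abs_riemannSum_binaryDigit_sub_le j)).2]

lemma exists_mem_msum_digitHull_le_apply_add (hge : IsBiorthogonal e g) (j s : ℕ) :
    ∃ z ∈ msum (digitHull e) P, 3 / 4 - 2 ^ (j + s + 4) * P.mesh ≤ (g j + g (j + s + 1)) z := by
  obtain ⟨z, hz, hφz⟩ := exists_mem_msum_apply_eq_riemannSum _ P (g j + g (j + s + 1))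
    (c := fun t => (max (binaryDigit j t) (binaryDigit (j + s + 1) t) : ℝ))
    fun _ => exists_mem_digitHull_apply_add_eq_max hge (by omega) _
  exact ⟨z, hz, by linarith [(abs_le.1 (P.abs_riemannSum_max_binaryDigit_sub_le j s)).1]⟩

end DigitHull

theorem limitSets_digitHull_eq_empty {X : Type*} [NormedAddCommGroup X] [NormedSpace ℝ X]
    {e : ℕ → X} {g : ℕ → X →L[ℝ] ℝ} {C : ℝ} (hg : ∀ r, ‖g r‖ ≤ C) (hge : IsBiorthogonal e g) :
    limitSets (digitHull e) = ∅ := by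
  refine eq_empty_iff_forall_notMem.2 ?_
  rintro A ⟨-, -, P, hmesh, hdist⟩
  have hC : 0 ≤ C := (norm_nonneg _).trans (hg 0)
  set ε := 1 / (40 * (C + 1))
  have hε : 0 < ε := by positivity
  have hCε : C * ε + ε = 1 / 40 := by simp only [ε]; field_simp
  have hclose : ∀ᶠ k in atTop,
      hausdorffEDist (msum (digitHull e) (P k)) A < ENNReal.ofReal ε :=
    hdist.eventually (gt_mem_nhds (ENNReal.ofReal_pos.2 hε))
  obtain ⟨k₀, hk₀⟩ := hclose.exists
  obtain ⟨j, l, hjl, hiff⟩ := Nat.exists_lt_forall_iff_of_finite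
    fun r (i : Fin (P k₀).n) => binaryDigit r ((P k₀).tag i) = 1
  obtain ⟨s, rfl⟩ : ∃ s, l = j + s + 1 := ⟨l - j - 1, by omega⟩
  obtain ⟨k, hk, hkmesh⟩ := (hclose.and (hmesh.eventually
    (gt_mem_nhds (by positivity : 0 < ε / 2 ^ (j + s + 4))))).exists
  rw [lt_div_iff₀ (by positivity)] at hkmesh
  have hkmesh' : 2 ^ (j + 3) * (P k).mesh ≤ ε :=
    le_trans (mul_le_mul_of_nonneg_right (pow_le_pow_right₀ one_le_two
      (show j + 3 ≤ j + s + 4 by omega)) (P k).mesh_nonneg) (by linarith)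
  set φ := g j + g (j + s + 1)
  have hφ : ‖φ‖ ≤ 2 * C := (norm_add_le _ _).trans (by linarith [hg j, hg (j + s + 1)])
  -- on `msum (P k₀)` both `g j` and `φ` have supremum `W`; on the finer `msum (P k)` their
  -- suprema are near `1/2` and `3/4`
  set W := (P k₀).riemannSum (fun t => (binaryDigit j t : ℝ))
  obtain ⟨x₀, hx₀, hgx₀⟩ := exists_mem_msum_digitHull_apply_eq (P k₀) hge j
  obtain ⟨x, hx, hx₀x⟩ := exists_apply_le_add_of_hausdorffEDist_lt_of_lt hk₀ hk (g j) hx₀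
  obtain ⟨z, hz, hφz⟩ := exists_mem_msum_digitHull_le_apply_add (P k) hge j s
  obtain ⟨z₀, hz₀, hzz₀⟩ := exists_apply_le_add_of_hausdorffEDist_lt_of_lt hk hk₀ φ hz
  have hgx := apply_le_of_mem_msum_digitHull (P k) hge j hx
  have hφz₀ := apply_add_le_of_mem_msum_digitHull (P k₀) hge (by omega) (hiff ·) hz₀
  have hgε := mul_le_mul_of_nonneg_right (hg j) hε.le
  have hφε := mul_le_mul_of_nonneg_right hφ hε.le
  linarith

lemma exists_normalized_biorthogonal {X : Type*} [NormedAddCommGroup X] [NormedSpace ℝ X]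
    {C : ℝ} {x : ℕ → X} {f : ℕ → X →L[ℝ] ℝ} (hbi : IsBiorthogonal x f)
    (hbd : ∀ i, ‖x i‖ * ‖f i‖ ≤ C) :
    ∃ (e : ℕ → X) (g : ℕ → X →L[ℝ] ℝ), (∀ r, ‖e r‖ = 1) ∧ (∀ r, ‖g r‖ ≤ C) ∧
      IsBiorthogonal e g := by
  have hx : ∀ r, x r ≠ 0 := fun r h => by simpa [h] using hbi r r
  refine ⟨fun r => ‖x r‖⁻¹ • x r, fun r => ‖x r‖ • f r, fun r => norm_smul_inv_norm (hx r),
    fun r => (norm_smul_le (‖x r‖) (f r)).trans (by rw [norm_norm]; exact hbd r),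
    fun r r' => ?_⟩
  simp only [smul_apply, map_smul, smul_eq_mul, hbi r r']
  split_ifs with h
  · subst h; field_simp [norm_ne_zero_iff.2 (hx r)]
  · simp

theorem exists_boundedConvexMultifunction_limitSets_empty_of_biorthogonal_general
    {X : Type*} [NormedAddCommGroup X] [NormedSpace ℝ X]
    (C : ℝ) (x : ℕ → X) (f : ℕ → X →L[ℝ] ℝ)
    (hbi : ∀ i j, f i (x j) = if i = j then 1 else 0)
    (hbd : ∀ i, ‖x i‖ * ‖f i‖ ≤ C) :
    ∃ F : ℝ → Set X,
      (∀ t ∈ Set.Icc (0 : ℝ) 1, (F t).Nonempty) ∧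
      (∀ t ∈ Set.Icc (0 : ℝ) 1, Convex ℝ (F t)) ∧
      (∃ M : ℝ, ∀ t ∈ Set.Icc (0 : ℝ) 1, ∀ a ∈ F t, ‖a‖ ≤ M) ∧
      limitSets F = ∅ := by
  obtain ⟨e, g, he, hg, hge⟩ := exists_normalized_biorthogonal hbi hbd
  exact ⟨digitHull e, fun t _ => ⟨0, zero_mem_digitHull t⟩, fun t _ => convex_convexHull ℝ _,
    ⟨1, fun t _ a ha => norm_le_one_of_mem_digitHull (fun r => (he r).le) ha⟩,
    limitSets_digitHull_eq_empty hg hge⟩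

/-- If a real Banach space has a biorthogonal system `{x_i}, {f_i}` bounded by `C`
(`f_i(x_j) = δ_{ij}`, `‖x_i‖·‖f_i‖ ≤ C`), then there is a bounded convex-valued
multifunction `F` on `[0,1]` with `I(F) = ∅`. -/
theorem exists_boundedConvexMultifunction_limitSets_empty_of_biorthogonal
    {X : Type*} [NormedAddCommGroup X] [NormedSpace ℝ X] [CompleteSpace X]
    (C : ℝ) (x : ℕ → X) (f : ℕ → X →L[ℝ] ℝ)
    (hbi : ∀ i j, f i (x j) = if i = j then 1 else 0)
    (hbd : ∀ i, ‖x i‖ * ‖f i‖ ≤ C) :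
    ∃ F : ℝ → Set X,
      (∀ t ∈ Set.Icc (0 : ℝ) 1, (F t).Nonempty) ∧
      (∀ t ∈ Set.Icc (0 : ℝ) 1, Convex ℝ (F t)) ∧
      (∃ M : ℝ, ∀ t ∈ Set.Icc (0 : ℝ) 1, ∀ a ∈ F t, ‖a‖ ≤ M) ∧
      limitSets F = ∅ :=
  exists_boundedConvexMultifunction_limitSets_empty_of_biorthogonal_general C x f hbi hbd
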